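/- Let (X,T) be a topological dynamical system. For any sequence (Φ_k)_{k∈ℕ} of continuous partitions of unity on X with diam(Φ_k) → 0 as k → ∞, and any continuous partition of unity Ψ on X, lim_{k→∞} h̃(Φ_k | Ψ) = h̃(T | Ψ). -/

import Mathlib

open MeasureTheory Filter Set

/-! ### Partitions of unity -/

/-- A finite partition of unity on `X`: a finite family of functions `X → [0,1]`
summing to `1` everywhere. -/
structure PartUnity (X : Type*) where
  n : ℕ
  f : Fin n → X → ℝ
  nonneg : ∀ i x, 0 ≤ f i x
  le_one : ∀ i x, f i x ≤ 1
  sum_one : ∀ x, ∑ i, f i x = 1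

namespace PartUnity

variable {X Y : Type*}

/-- A continuous partition of unity. -/
def Cont [TopologicalSpace X] (Φ : PartUnity X) : Prop := ∀ i, Continuous (Φ.f i)

/-- A measurable partition of unity. -/
def Meas [MeasurableSpace X] (Φ : PartUnity X) : Prop := ∀ i, Measurable (Φ.f i)

/-- A positive partition of unity. -/
def Pos (Φ : PartUnity X) : Prop := ∀ i x, 0 < Φ.f i x

/-- The join `Φ ∨ Ψ = {φ·ψ : φ ∈ Φ, ψ ∈ Ψ}` of two partitions of unity. -/
def join (Φ Ψ : PartUnity X) : PartUnity X where
  n := Φ.n * Ψ.n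
  f k x := Φ.f (finProdFinEquiv.symm k).1 x * Ψ.f (finProdFinEquiv.symm k).2 x
  nonneg k x := mul_nonneg (Φ.nonneg _ x) (Ψ.nonneg _ x)
  le_one k x := mul_le_one₀ (Φ.le_one _ x) (Ψ.nonneg _ x) (Ψ.le_one _ x)
  sum_one x := by
    rw [← Equiv.sum_comp (finProdFinEquiv : Fin Φ.n × Fin Ψ.n ≃ Fin (Φ.n * Ψ.n))
      (fun k => Φ.f (finProdFinEquiv.symm k).1 x * Ψ.f (finProdFinEquiv.symm k).2 x)]
    simp only [Equiv.symm_apply_apply]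
    rw [Fintype.sum_prod_type]
    dsimp only
    rw [← Finset.sum_mul_sum, Φ.sum_one x, Ψ.sum_one x, one_mul]

/-- Pull back a partition of unity by a map: `TΦ = {φ ∘ T : φ ∈ Φ}`. -/
def comp (Φ : PartUnity X) (T : Y → X) : PartUnity Y where
  n := Φ.n
  f i y := Φ.f i (T y)
  nonneg i y := Φ.nonneg i (T y)
  le_one i y := Φ.le_one i (T y)
  sum_one y := Φ.sum_one (T y)

/-- The trivial partition of unity `{1}`. -/
def triv (X : Type*) : PartUnity X where
  n := 1
  f _ _ := 1
  nonneg _ _ := zero_le_one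
  le_one _ _ := le_rfl
  sum_one _ := by simp

/-- `dyn T Φ n` is the dynamical join `Φ₀ⁿ⁻¹ = ⋁_{i=0}^{n-1} TⁱΦ`
(joined with a harmless trivial factor). -/
def dyn (T : X → X) (Φ : PartUnity X) : ℕ → PartUnity X
  | 0 => triv X
  | n + 1 => Φ.join ((dyn T Φ n).comp T)

/-- The product partition of unity `Φ ⊗ Ψ` on `X × Y`. -/
def prod (Φ : PartUnity X) (Ψ : PartUnity Y) : PartUnity (X × Y) where
  n := Φ.n * Ψ.n
  f k p := Φ.f (finProdFinEquiv.symm k).1 p.1 * Ψ.f (finProdFinEquiv.symm k).2 p.2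
  nonneg k p := mul_nonneg (Φ.nonneg _ _) (Ψ.nonneg _ _)
  le_one k p := mul_le_one₀ (Φ.le_one _ _) (Ψ.nonneg _ _) (Ψ.le_one _ _)
  sum_one p := by
    rw [← Equiv.sum_comp (finProdFinEquiv : Fin Φ.n × Fin Ψ.n ≃ Fin (Φ.n * Ψ.n))
      (fun k => Φ.f (finProdFinEquiv.symm k).1 p.1 * Ψ.f (finProdFinEquiv.symm k).2 p.2)]
    simp only [Equiv.symm_apply_apply]
    rw [Fintype.sum_prod_type]
    dsimp only
    rw [← Finset.sum_mul_sum, Φ.sum_one p.1, Ψ.sum_one p.2, one_mul]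

/-- The diameter of a partition of unity: the maximum of the diameters of the
supports of its members. -/
noncomputable def diam [PseudoMetricSpace X] (Φ : PartUnity X) : ℝ :=
  ⨆ i, Metric.diam (tsupport (Φ.f i))

end PartUnity

/-! ### Metric entropy via partitions of unity -/

variable {X Y : Type*}

/-- The static entropy `H̃_μ(Φ) = Σ_φ ( −μ(φ) log μ(φ) + μ(φ log φ) )`. -/
noncomputable def statEnt [MeasurableSpace X] (μ : Measure X) (Φ : PartUnity X) : ℝ :=
  ∑ i, (-((∫ x, Φ.f i x ∂μ) * Real.log (∫ x, Φ.f i x ∂μ)) +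
    ∫ x, Φ.f i x * Real.log (Φ.f i x) ∂μ)

/-- The conditional measure `μ_ψ`, determined by `μ_ψ(φ) = μ(φψ)/μ(ψ)`. -/
noncomputable def condMeas [MeasurableSpace X] (μ : Measure X) (ψ : X → ℝ) : Measure X :=
  (ENNReal.ofReal (∫ x, ψ x ∂μ))⁻¹ • μ.withDensity (fun x => ENNReal.ofReal (ψ x))

/-- The conditional static entropy `H̃_μ(Φ | Ψ) = Σ_ψ μ(ψ) H̃_{μ_ψ}(Φ)`
(terms with `μ(ψ) = 0` vanish since they are multiplied by `μ(ψ) = 0`). -/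
noncomputable def condStatEnt [MeasurableSpace X] (μ : Measure X) (Φ Ψ : PartUnity X) : ℝ :=
  ∑ j, (∫ x, Ψ.f j x ∂μ) * statEnt (condMeas μ (Ψ.f j)) Φ

/-- The local metric entropy `h̃_μ(T,Φ) = lim_n H̃_μ(Φ₀ⁿ⁻¹)/n`. -/
noncomputable def locEnt [MeasurableSpace X] (T : X → X) (μ : Measure X) (Φ : PartUnity X) : ℝ :=
  Filter.atTop.limsup fun n : ℕ => statEnt μ (PartUnity.dyn T Φ n) / (n : ℝ)

/-- The local conditional metric entropy `h̃_μ(T,Φ|Ψ) = lim_n H̃_μ(Φ₀ⁿ⁻¹|Ψ₀ⁿ⁻¹)/n`. -/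
noncomputable def condLocEnt [MeasurableSpace X] (T : X → X) (μ : Measure X)
    (Φ Ψ : PartUnity X) : ℝ :=
  Filter.atTop.limsup fun n : ℕ =>
    condStatEnt μ (PartUnity.dyn T Φ n) (PartUnity.dyn T Ψ n) / (n : ℝ)

/-- The metric entropy `h̃_μ(T)`: supremum of `h̃_μ(T,Φ)` over continuous
partitions of unity. -/
noncomputable def metEnt [TopologicalSpace X] [MeasurableSpace X]
    (T : X → X) (μ : Measure X) : EReal :=
  ⨆ Φ : {Φ : PartUnity X // Φ.Cont}, ((locEnt T μ Φ.1 : ℝ) : EReal)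

/-! ### Topological entropy via partitions of unity -/

/-- The topological static entropy `H̃(Φ) = Σ_φ sup φ`. -/
noncomputable def topStat (Φ : PartUnity X) : ℝ := ∑ i, ⨆ x, Φ.f i x

/-- The local topological entropy `h̃(T,Φ) = lim_n (1/n) log H̃(Φ₀ⁿ⁻¹)`. -/
noncomputable def topLocEnt (T : X → X) (Φ : PartUnity X) : ℝ :=
  Filter.atTop.limsup fun n : ℕ => Real.log (topStat (PartUnity.dyn T Φ n)) / (n : ℝ)

/-- The topological entropy `h̃_top(T)`: supremum of `h̃(T,Φ)` over continuous
partitions of unity. -/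
noncomputable def topEnt [TopologicalSpace X] (T : X → X) : EReal :=
  ⨆ Φ : {Φ : PartUnity X // Φ.Cont}, ((topLocEnt T Φ.1 : ℝ) : EReal)

/-! ### Classical Kolmogorov–Sinai entropy -/

/-- A finite Borel partition of `X` (indexed; atoms may be empty). -/
structure FinBorelPart (X : Type*) [MeasurableSpace X] where
  n : ℕ
  A : Fin n → Set X
  meas : ∀ i, MeasurableSet (A i)
  disj : ∀ i j, i ≠ j → Disjoint (A i) (A j)
  cover : ⋃ i, A i = Set.univ

/-- Local Kolmogorov–Sinai entropy `h_μ(T,𝒜) = lim_n (1/n) Σ_{A ∈ 𝒜₀ⁿ⁻¹} −μ(A) log μ(A)`. -/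
noncomputable def ksLocEnt [MeasurableSpace X] (T : X → X) (μ : Measure X)
    (P : FinBorelPart X) : ℝ :=
  Filter.atTop.limsup fun n : ℕ =>
    (∑ σ : Fin n → Fin P.n,
      Real.negMulLog (μ (⋂ i : Fin n, T^[(i : ℕ)] ⁻¹' P.A (σ i))).toReal) / (n : ℝ)

/-- The Kolmogorov–Sinai metric entropy `h_μ(T)`. -/
noncomputable def ksEnt [MeasurableSpace X] (T : X → X) (μ : Measure X) : EReal :=
  ⨆ P : FinBorelPart X, ((ksLocEnt T μ P : ℝ) : EReal)

/-! ### Classical topological entropy via open covers -/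

/-- A finite open cover of `X`. -/
structure FinOpenCover (X : Type*) [TopologicalSpace X] where
  n : ℕ
  U : Fin n → Set X
  opn : ∀ i, IsOpen (U i)
  cov : ⋃ i, U i = Set.univ

/-- The member `⋂_{i<n} T^{-i} U_{σ(i)}` of the dynamical refinement of a cover. -/
def dynSet (T : X → X) {m : ℕ} (U : Fin m → Set X) (n : ℕ) (σ : Fin n → Fin m) : Set X :=
  ⋂ i : Fin n, T^[(i : ℕ)] ⁻¹' U (σ i)

/-- Minimal cardinality of a subfamily of `V` covering `S`. -/
noncomputable def coverNum {α : Type*} [Fintype α] (V : α → Set X) (S : Set X) : ℕ :=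
  sInf {k | ∃ t : Finset α, t.card = k ∧ S ⊆ ⋃ i ∈ t, V i}

/-- The local classical topological entropy `h(T,𝒰)` of an open cover. -/
noncomputable def covLocEnt [TopologicalSpace X] (T : X → X) (C : FinOpenCover X) : ℝ :=
  Filter.atTop.limsup fun n : ℕ =>
    Real.log ((coverNum (fun σ : Fin n → Fin C.n => dynSet T C.U n σ) Set.univ : ℕ) : ℝ) / (n : ℝ)

/-- The classical topological entropy `h_top(T)` via open covers. -/
noncomputable def topEntCov [TopologicalSpace X] (T : X → X) : EReal :=
  ⨆ C : FinOpenCover X, ((covLocEnt T C : ℝ) : EReal)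

/-! ### Misiurewicz topological tail entropy -/

/-- The local conditional topological entropy `h(𝒰|𝒱)` of two open covers. -/
noncomputable def misCondLoc [TopologicalSpace X] (T : X → X) (CU CV : FinOpenCover X) : ℝ :=
  Filter.atTop.limsup fun n : ℕ =>
    Real.log (((⨆ τ : Fin n → Fin CV.n,
      coverNum (fun σ : Fin n → Fin CU.n => dynSet T CU.U n σ) (dynSet T CV.U n τ) : ℕ)) : ℝ) / (n : ℝ)

/-- The conditional topological entropy `h(T|𝒱) = sup_𝒰 h(𝒰|𝒱)`. -/
noncomputable def misCond [TopologicalSpace X] (T : X → X) (CV : FinOpenCover X) : EReal :=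
  ⨆ CU : FinOpenCover X, ((misCondLoc T CU CV : ℝ) : EReal)

/-- Misiurewicz's topological tail entropy `h*(T) = inf_𝒱 h(T|𝒱)`. -/
noncomputable def misTail [TopologicalSpace X] (T : X → X) : EReal :=
  ⨅ CV : FinOpenCover X, misCond T CV

/-! ### Topological tail entropy via partitions of unity -/

/-- `H̃(Φ|ψ) = Σ_φ sup_{supp ψ} φ`. -/
noncomputable def condTopStatPU [TopologicalSpace X] (Φ : PartUnity X) (ψ : X → ℝ) : ℝ :=
  ∑ i, ⨆ x ∈ tsupport ψ, Φ.f i x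

/-- The weight set `D(Ψ) = {a : inf ψ ≤ a_ψ ≤ sup ψ, Σ a_ψ = 1}`. -/
def weights (Ψ : PartUnity X) : Set (Fin Ψ.n → ℝ) :=
  {a | (∀ j, (⨅ x, Ψ.f j x) ≤ a j ∧ a j ≤ ⨆ x, Ψ.f j x) ∧ ∑ j, a j = 1}

/-- `H̃_n(Φ|Ψ) = sup_{a ∈ D(Ψ₀ⁿ⁻¹)} Σ_ψ a_ψ H̃(Φ₀ⁿ⁻¹|ψ)`. -/
noncomputable def tailStat [TopologicalSpace X] (T : X → X) (Φ Ψ : PartUnity X) (n : ℕ) : ℝ :=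
  sSup {r | ∃ a ∈ weights (PartUnity.dyn T Ψ n),
    r = ∑ j, a j * condTopStatPU (PartUnity.dyn T Φ n) ((PartUnity.dyn T Ψ n).f j)}

/-- The local conditional topological entropy `h̃(Φ|Ψ) = limsup_n (1/n) log H̃_n(Φ|Ψ)`. -/
noncomputable def tailLoc [TopologicalSpace X] (T : X → X) (Φ Ψ : PartUnity X) : ℝ :=
  Filter.atTop.limsup fun n : ℕ => Real.log (tailStat T Φ Ψ n) / (n : ℝ)

/-- The conditional topological entropy `h̃(T|Ψ) = sup_Φ h̃(Φ|Ψ)` over continuous `Φ`. -/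
noncomputable def condTopEntPU [TopologicalSpace X] (T : X → X) (Ψ : PartUnity X) : EReal :=
  ⨆ Φ : {Φ : PartUnity X // Φ.Cont}, ((tailLoc T Φ.1 Ψ : ℝ) : EReal)

/-- The topological tail entropy `h̃*(T) = inf_Ψ h̃(T|Ψ)` over continuous `Ψ`. -/
noncomputable def tailEntPU [TopologicalSpace X] (T : X → X) : EReal :=
  ⨅ Ψ : {Ψ : PartUnity X // Ψ.Cont}, condTopEntPU T Ψ.1

/-! ### Pressures -/

/-- The Birkhoff sum `S_n g = Σ_{i<n} g ∘ Tⁱ`. -/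
def birkhoff (T : X → X) (g : X → ℝ) (n : ℕ) (x : X) : ℝ :=
  ∑ i ∈ Finset.range n, g (T^[i] x)

/-- The static pressure `P̃(T,g,Φ,n) = Σ_{φ ∈ Φ₀ⁿ⁻¹} sup (φ e^{S_n g})`. -/
noncomputable def puPressStat (T : X → X) (g : X → ℝ) (Φ : PartUnity X) (n : ℕ) : ℝ :=
  ∑ i, ⨆ x, (PartUnity.dyn T Φ n).f i x * Real.exp (birkhoff T g n x)

/-- The local topological pressure `P̃_top(T,g,Φ) = lim_n (1/n) log P̃(T,g,Φ,n)`. -/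
noncomputable def puLocPress (T : X → X) (g : X → ℝ) (Φ : PartUnity X) : ℝ :=
  Filter.atTop.limsup fun n : ℕ => Real.log (puPressStat T g Φ n) / (n : ℝ)

/-- The topological pressure `P̃_top(T,g)` via continuous partitions of unity. -/
noncomputable def puTopPress [TopologicalSpace X] (T : X → X) (g : X → ℝ) : EReal :=
  ⨆ Φ : {Φ : PartUnity X // Φ.Cont}, ((puLocPress T g Φ.1 : ℝ) : EReal)

/-- The classical static pressure of an open cover:
`inf { Σ_{V ∈ 𝒱} sup_V e^{S_n g} : 𝒱 a subcover of 𝒰₀ⁿ⁻¹ }`. -/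
noncomputable def covPressStat [TopologicalSpace X] (T : X → X) (g : X → ℝ)
    (C : FinOpenCover X) (n : ℕ) : ℝ :=
  sInf {r | ∃ t : Finset (Fin n → Fin C.n),
    (Set.univ ⊆ ⋃ σ ∈ t, dynSet T C.U n σ) ∧
    r = ∑ σ ∈ t, ⨆ x ∈ dynSet T C.U n σ, Real.exp (birkhoff T g n x)}

/-- The local classical topological pressure of an open cover. -/
noncomputable def covLocPress [TopologicalSpace X] (T : X → X) (g : X → ℝ)
    (C : FinOpenCover X) : ℝ :=
  Filter.atTop.limsup fun n : ℕ => Real.log (covPressStat T g C n) / (n : ℝ)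

/-- The classical topological pressure `P_top(T,g)` via open covers. -/
noncomputable def topPress [TopologicalSpace X] (T : X → X) (g : X → ℝ) : EReal :=
  ⨆ C : FinOpenCover X, ((covLocPress T g C : ℝ) : EReal)

/-! ### Topological tail pressure -/

/-- `P̃_n(T,g,Φ|Ψ) = sup_{a ∈ D(Ψ₀ⁿ⁻¹)} Σ_ψ a_ψ Σ_φ sup_{supp ψ} (φ e^{S_n g})`. -/
noncomputable def tailPressStat [TopologicalSpace X] (T : X → X) (g : X → ℝ)
    (Φ Ψ : PartUnity X) (n : ℕ) : ℝ :=
  sSup {r | ∃ a ∈ weights (PartUnity.dyn T Ψ n),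
    r = ∑ j, a j * ∑ i, ⨆ x ∈ tsupport ((PartUnity.dyn T Ψ n).f j),
      (PartUnity.dyn T Φ n).f i x * Real.exp (birkhoff T g n x)}

/-- The local topological tail pressure `P̃(T,g,Φ|Ψ) = limsup_n (1/n) log P̃_n(T,g,Φ|Ψ)`. -/
noncomputable def tailLocPress [TopologicalSpace X] (T : X → X) (g : X → ℝ)
    (Φ Ψ : PartUnity X) : ℝ :=
  Filter.atTop.limsup fun n : ℕ => Real.log (tailPressStat T g Φ Ψ n) / (n : ℝ)

/-- The conditional topological pressure `P̃(T,g|Ψ) = sup_Φ P̃(T,g,Φ|Ψ)` over continuous `Φ`. -/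
noncomputable def condTopPressPU [TopologicalSpace X] (T : X → X) (g : X → ℝ)
    (Ψ : PartUnity X) : EReal :=
  ⨆ Φ : {Φ : PartUnity X // Φ.Cont}, ((tailLocPress T g Φ.1 Ψ : ℝ) : EReal)

/-- The topological tail pressure `P̃*(T,g) = inf_Ψ P̃(T,g|Ψ)` over continuous `Ψ`. -/
noncomputable def puTailPress [TopologicalSpace X] (T : X → X) (g : X → ℝ) : EReal :=
  ⨅ Ψ : {Ψ : PartUnity X // Ψ.Cont}, condTopPressPU T g Ψ.1

/-! ### Classical topological tail pressure (Li–Chen–Cheng) -/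

/-- The Bowen ball `B(x,ε,n) = {y : d(Tⁱx,Tⁱy) < ε for all 0 ≤ i < n}`. -/
def bowenBall [PseudoMetricSpace X] (T : X → X) (x : X) (ε : ℝ) (n : ℕ) : Set X :=
  {y | ∀ i < n, dist (T^[i] x) (T^[i] y) < ε}

/-- `E` is `(n,δ)`-separated: distinct points `y,z ∈ E` satisfy `d(Tⁱy,Tⁱz) > δ`
for some `0 ≤ i < n`. -/
def IsSep [PseudoMetricSpace X] (T : X → X) (n : ℕ) (δ : ℝ) (E : Finset X) : Prop :=
  ∀ y ∈ E, ∀ z ∈ E, y ≠ z → ∃ i < n, δ < dist (T^[i] y) (T^[i] z)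

/-- `P_n(T,g,δ,ε) = sup_x sup { Σ_{y∈E} e^{S_n g(y)} : E (n,δ)-separated ⊆ B(x,ε,n) }`. -/
noncomputable def sepPress [PseudoMetricSpace X] (T : X → X) (g : X → ℝ)
    (n : ℕ) (δ ε : ℝ) : ℝ :=
  ⨆ x : X, sSup {r | ∃ E : Finset X, ↑E ⊆ bowenBall T x ε n ∧ IsSep T n δ E ∧
    r = ∑ y ∈ E, Real.exp (birkhoff T g n y)}

/-- The classical topological tail pressure
`P*(T,g) = lim_{ε→0} lim_{δ→0} limsup_n (1/n) log P_n(T,g,δ,ε)`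
(the inner limits are monotone, hence given by `inf_ε sup_δ`). -/
noncomputable def tailPress [PseudoMetricSpace X] (T : X → X) (g : X → ℝ) : EReal :=
  ⨅ ε : {ε : ℝ // 0 < ε}, ⨆ δ : {δ : ℝ // 0 < δ},
    Filter.atTop.limsup fun n : ℕ => ((Real.log (sepPress T g n δ.1 ε.1) / (n : ℝ) : ℝ) : EReal)

/-! If every member of `Φ` has support of small diameter, each member `φ` of `Φ` meets the
members `φ'` of a fixed continuous `Φ'` only where they are nearly constant, so
`Σ_{φ'} sup_{supp φ} φ' ≤ e^ε` by uniform continuity. Inserting `1 = Σ_φ φ` into each factor of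
`Φ'₀ⁿ⁻¹` and inducting on `n` gives `H̃(Φ'₀ⁿ⁻¹|ψ) ≤ e^{nε} H̃(Φ₀ⁿ⁻¹|ψ)`, hence
`h̃(Φ'|Ψ) ≤ h̃(Φ|Ψ) + ε`. Together with `h̃(Φ_k|Ψ) ≤ h̃(T|Ψ)` this gives the limit. -/

lemma Real.biSup_le {S : Set X} {g : X → ℝ} {a : ℝ} (ha : 0 ≤ a) (h : ∀ x ∈ S, g x ≤ a) :
    ⨆ x ∈ S, g x ≤ a :=
  Real.iSup_le (fun x => Real.iSup_le (h x) ha) ha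

lemma Real.le_biSup {S : Set X} {g : X → ℝ} {B : ℝ} (hB : ∀ x ∈ S, g x ≤ B) {x₀ : X}
    (hx₀ : x₀ ∈ S) : g x₀ ≤ ⨆ x ∈ S, g x := by
  have hbdd : BddAbove (Set.range fun x => ⨆ _ : x ∈ S, g x) := by
    refine ⟨max B 0, ?_⟩
    rintro _ ⟨x, rfl⟩
    exact Real.iSup_le (fun hx => le_max_of_le_left (hB x hx)) (le_max_right _ _)
  refine le_trans ?_ (le_ciSup hbdd x₀)
  exact le_ciSup (f := fun _ : x₀ ∈ S => g x₀) ⟨g x₀, by rintro _ ⟨_, rfl⟩; rfl⟩ hx₀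

lemma Real.biSup_nonneg {S : Set X} {g : X → ℝ} (hg : ∀ x, 0 ≤ g x) : 0 ≤ ⨆ x ∈ S, g x :=
  Real.iSup_nonneg fun x => Real.iSup_nonneg fun _ => hg x

lemma mul_le_mul_biSup_tsupport [TopologicalSpace X] {f g : X → ℝ} {B : ℝ} (hB : ∀ x, g x ≤ B)
    {x : X} (hfx : 0 ≤ f x) : f x * g x ≤ f x * ⨆ y ∈ tsupport f, g y := by
  rcases eq_or_ne (f x) 0 with h0 | h0
  · simp [h0]
  · exact mul_le_mul_of_nonneg_left
      (Real.le_biSup (fun y _ => hB y) (subset_tsupport f (Function.mem_support.2 h0))) hfx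

namespace PartUnity

lemma n_pos [Nonempty X] (Φ : PartUnity X) : 0 < Φ.n := by
  refine Fin.pos_iff_nonempty.2 (not_isEmpty_iff.1 fun h => ?_)
  simpa using Φ.sum_one (Classical.arbitrary X)

lemma dyn_n (T : X → X) (Φ : PartUnity X) (n : ℕ) : (dyn T Φ n).n = Φ.n ^ n := by
  induction n with
  | zero => rfl
  | succ n ih => rw [pow_succ, mul_comm, ← ih]; rfl

lemma sum_join {α : Type*} [AddCommMonoid α] (Φ Ψ : PartUnity X) (F : (X → ℝ) → α) :
    ∑ k, F ((Φ.join Ψ).f k) = ∑ i, ∑ j, F (fun x => Φ.f i x * Ψ.f j x) := by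
  rw [← Fintype.sum_prod_type']
  exact Fintype.sum_equiv finProdFinEquiv.symm _ _ fun _ => rfl

lemma diam_tsupport_le [PseudoMetricSpace X] (Φ : PartUnity X) (i : Fin Φ.n) :
    Metric.diam (tsupport (Φ.f i)) ≤ Φ.diam :=
  le_ciSup (f := fun i => Metric.diam (tsupport (Φ.f i))) (Set.finite_range _).bddAbove i

/-- For `S = supp ψ`, `w = 1` and `p = id` this is `H̃(Φ|ψ)`; the weight `w` and the map `p`
absorb the factors already split off when `Φ₀ⁿ⁻¹` is unfolded. -/
noncomputable def weightedSupSum (Φ : PartUnity X) (S : Set Y) (w : Y → ℝ) (p : Y → X) : ℝ :=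
  ∑ i, ⨆ y ∈ S, w y * Φ.f i (p y)

lemma weightedSupSum_nonneg (Φ : PartUnity X) (S : Set Y) {w : Y → ℝ} (hw : ∀ y, 0 ≤ w y)
    (p : Y → X) : 0 ≤ Φ.weightedSupSum S w p :=
  Finset.sum_nonneg fun i _ => Real.biSup_nonneg fun y => mul_nonneg (hw y) (Φ.nonneg i _)

lemma weightedSupSum_join (Φ Ψ : PartUnity X) (S : Set Y) (w : Y → ℝ) (p : Y → X) :
    (Φ.join Ψ).weightedSupSum S w p =
      ∑ i, Ψ.weightedSupSum S (fun y => w y * Φ.f i (p y)) p := by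
  simp only [weightedSupSum, sum_join _ _ (fun g => ⨆ y ∈ S, w y * g (p y)), mul_assoc]

lemma biSup_mul_le_sum_mul_biSup [TopologicalSpace X] (Φ : PartUnity X) {f g : X → ℝ}
    (hf0 : ∀ x, 0 ≤ f x) (hf1 : ∀ x, f x ≤ 1) (hg0 : ∀ x, 0 ≤ g x) (hg1 : ∀ x, g x ≤ 1)
    (S : Set Y) {w : Y → ℝ} (hw0 : ∀ y, 0 ≤ w y) (hw1 : ∀ y, w y ≤ 1) (p : Y → X) :
    ⨆ y ∈ S, w y * (f (p y) * g (p y)) ≤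
      ∑ j, (⨆ x ∈ tsupport (Φ.f j), f x) * ⨆ y ∈ S, w y * Φ.f j (p y) * g (p y) := by
  refine Real.biSup_le (Finset.sum_nonneg fun j _ => mul_nonneg (Real.biSup_nonneg hf0)
    (Real.biSup_nonneg fun y => mul_nonneg (mul_nonneg (hw0 y) (Φ.nonneg j _)) (hg0 _)))
    fun y hy => ?_
  calc w y * (f (p y) * g (p y))
      = ∑ j, Φ.f j (p y) * f (p y) * (w y * g (p y)) := by
        rw [← Finset.sum_mul, ← Finset.sum_mul, Φ.sum_one]; ring
    _ ≤ ∑ j, Φ.f j (p y) * (⨆ x ∈ tsupport (Φ.f j), f x) * (w y * g (p y)) :=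
        Finset.sum_le_sum fun j _ => mul_le_mul_of_nonneg_right
          (mul_le_mul_biSup_tsupport hf1 (Φ.nonneg j _)) (mul_nonneg (hw0 y) (hg0 _))
    _ = ∑ j, (⨆ x ∈ tsupport (Φ.f j), f x) * (w y * Φ.f j (p y) * g (p y)) :=
        Finset.sum_congr rfl fun j _ => by ring
    _ ≤ ∑ j, (⨆ x ∈ tsupport (Φ.f j), f x) * ⨆ y ∈ S, w y * Φ.f j (p y) * g (p y) := by
        gcongr with j
        · exact Real.biSup_nonneg hf0
        · refine Real.le_biSup (g := fun y => w y * Φ.f j (p y) * g (p y)) (B := 1)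
            (fun y _ => ?_) hy
          exact mul_le_one₀ (mul_le_one₀ (hw1 y) (Φ.nonneg j _) (Φ.le_one j _)) (hg0 _) (hg1 _)

lemma weightedSupSum_join_le [TopologicalSpace X] (Φ' Φ G : PartUnity X) (S : Set Y)
    {w : Y → ℝ} (hw0 : ∀ y, 0 ≤ w y) (hw1 : ∀ y, w y ≤ 1) (p : Y → X) :
    (Φ'.join G).weightedSupSum S w p ≤
      ∑ j, (∑ a, ⨆ x ∈ tsupport (Φ.f j), Φ'.f a x) *
        G.weightedSupSum S (fun y => w y * Φ.f j (p y)) p := by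
  set C : Fin Φ.n → Fin Φ'.n → ℝ := fun j a => ⨆ x ∈ tsupport (Φ.f j), Φ'.f a x
  set s : Fin Φ.n → Fin G.n → ℝ := fun j b => ⨆ y ∈ S, w y * Φ.f j (p y) * G.f b (p y)
  calc (Φ'.join G).weightedSupSum S w p
      = ∑ a, ∑ b, ⨆ y ∈ S, w y * (Φ'.f a (p y) * G.f b (p y)) :=
        sum_join _ _ (fun g => ⨆ y ∈ S, w y * g (p y))
    _ ≤ ∑ a, ∑ b, ∑ j, C j a * s j b := by
        gcongr with a _ b
        exact Φ.biSup_mul_le_sum_mul_biSup (Φ'.nonneg a) (Φ'.le_one a) (G.nonneg b)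
          (G.le_one b) S hw0 hw1 p
    _ = ∑ j, ∑ a, ∑ b, C j a * s j b :=
        (Finset.sum_congr rfl fun a _ => Finset.sum_comm).trans Finset.sum_comm
    _ = ∑ j, (∑ a, C j a) * ∑ b, s j b := by simp_rw [Finset.sum_mul_sum]
    _ = _ := by simp only [weightedSupSum, C, s]

lemma weightedSupSum_comp (G : PartUnity X) (T : X → X) (S : Set Y) (w : Y → ℝ) (p : Y → X) :
    (G.comp T).weightedSupSum S w p = G.weightedSupSum S w (T ∘ p) :=
  rfl

lemma weightedSupSum_dyn_le [TopologicalSpace X] (T : X → X) (Φ' Φ : PartUnity X) {c : ℝ}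
    (hc : 0 ≤ c) (hb : ∀ j, ∑ a, ⨆ x ∈ tsupport (Φ.f j), Φ'.f a x ≤ c) (S : Set Y) (n : ℕ)
    {w : Y → ℝ} (hw0 : ∀ y, 0 ≤ w y) (hw1 : ∀ y, w y ≤ 1) (p : Y → X) :
    (dyn T Φ' n).weightedSupSum S w p ≤ c ^ n * (dyn T Φ n).weightedSupSum S w p := by
  induction n generalizing w p with
  | zero => rw [pow_zero, one_mul]; rfl
  | succ n ih =>
    have hwj : ∀ j y, 0 ≤ w y * Φ.f j (p y) := fun j y => mul_nonneg (hw0 y) (Φ.nonneg j _)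
    calc (dyn T Φ' (n + 1)).weightedSupSum S w p
        ≤ ∑ j, (∑ a, ⨆ x ∈ tsupport (Φ.f j), Φ'.f a x) *
            (dyn T Φ' n).weightedSupSum S (fun y => w y * Φ.f j (p y)) (T ∘ p) :=
          weightedSupSum_join_le Φ' Φ _ S hw0 hw1 p
      _ ≤ ∑ j, c *
            (c ^ n * (dyn T Φ n).weightedSupSum S (fun y => w y * Φ.f j (p y)) (T ∘ p)) := by
          gcongr with j
          · exact weightedSupSum_nonneg _ S (hwj j) _
          · exact hb j
          · exact ih (hwj j) (fun y => mul_le_one₀ (hw1 y) (Φ.nonneg j _) (Φ.le_one j _)) _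
      _ = c ^ (n + 1) * (dyn T Φ (n + 1)).weightedSupSum S w p := by
          simp only [dyn, weightedSupSum_join, weightedSupSum_comp, Finset.mul_sum]
          exact Finset.sum_congr rfl fun j _ => by ring

end PartUnity

lemma nonneg_of_mem_weights {Ψ : PartUnity X} {a : Fin Ψ.n → ℝ} (ha : a ∈ weights Ψ)
    (j : Fin Ψ.n) : 0 ≤ a j :=
  (Real.iInf_nonneg fun x => Ψ.nonneg j x).trans (ha.1 j).1

lemma sum_weights_mul_le {Ψ : PartUnity X} {a : Fin Ψ.n → ℝ} (ha : a ∈ weights Ψ)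
    {b : Fin Ψ.n → ℝ} {K : ℝ} (hb : ∀ j, b j ≤ K) : ∑ j, a j * b j ≤ K :=
  calc ∑ j, a j * b j ≤ ∑ j, a j * K :=
        Finset.sum_le_sum fun j _ => mul_le_mul_of_nonneg_left (hb j) (nonneg_of_mem_weights ha j)
    _ = K := by rw [← Finset.sum_mul, ha.2, one_mul]

section TailStat

variable [TopologicalSpace X]

lemma condTopStatPU_eq_weightedSupSum (Φ : PartUnity X) (ψ : X → ℝ) :
    condTopStatPU Φ ψ = Φ.weightedSupSum (tsupport ψ) 1 id := by
  simp only [condTopStatPU, PartUnity.weightedSupSum, Pi.one_apply, one_mul, id]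

lemma condTopStatPU_le_card (Φ : PartUnity X) (ψ : X → ℝ) : condTopStatPU Φ ψ ≤ Φ.n := by
  calc condTopStatPU Φ ψ ≤ ∑ _i : Fin Φ.n, (1 : ℝ) :=
        Finset.sum_le_sum fun i _ => Real.biSup_le zero_le_one fun x _ => Φ.le_one i x
    _ = Φ.n := by simp

lemma le_tailStat (T : X → X) (Φ Ψ : PartUnity X) (n : ℕ) {a}
    (ha : a ∈ weights (PartUnity.dyn T Ψ n)) :
    ∑ j, a j * condTopStatPU (PartUnity.dyn T Φ n) ((PartUnity.dyn T Ψ n).f j) ≤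
      tailStat T Φ Ψ n := by
  refine le_csSup ⟨(PartUnity.dyn T Φ n).n, ?_⟩ ⟨a, ha, rfl⟩
  rintro _ ⟨b, hb, rfl⟩
  exact sum_weights_mul_le hb fun j => condTopStatPU_le_card _ _

lemma tailStat_le (T : X → X) (Φ Ψ : PartUnity X) (n : ℕ) {K : ℝ} (hK : 0 ≤ K)
    (h : ∀ a ∈ weights (PartUnity.dyn T Ψ n),
      ∑ j, a j * condTopStatPU (PartUnity.dyn T Φ n) ((PartUnity.dyn T Ψ n).f j) ≤ K) :
    tailStat T Φ Ψ n ≤ K :=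
  Real.sSup_le (by rintro _ ⟨a, ha, rfl⟩; exact h a ha) hK

lemma tailStat_le_pow (T : X → X) (Φ Ψ : PartUnity X) (n : ℕ) :
    tailStat T Φ Ψ n ≤ (Φ.n : ℝ) ^ n := by
  refine tailStat_le T Φ Ψ n (by positivity) fun a ha => sum_weights_mul_le ha fun j => ?_
  exact_mod_cast (condTopStatPU_le_card _ _).trans_eq (by rw [PartUnity.dyn_n, Nat.cast_pow])

/-- The values of the members of `Ψ₀ⁿ⁻¹` at any point form an admissible weight vector. -/
lemma one_le_tailStat [Nonempty X] (T : X → X) (Φ Ψ : PartUnity X) (n : ℕ) :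
    1 ≤ tailStat T Φ Ψ n := by
  obtain ⟨x₀⟩ := ‹Nonempty X›
  set P := PartUnity.dyn T Ψ n
  set Q := PartUnity.dyn T Φ n
  have hmem : (fun j => P.f j x₀) ∈ weights P := by
    refine ⟨fun j => ⟨?_, ?_⟩, P.sum_one x₀⟩
    · exact ciInf_le ⟨0, by rintro _ ⟨x, rfl⟩; exact P.nonneg j x⟩ x₀
    · exact le_ciSup ⟨1, by rintro _ ⟨x, rfl⟩; exact P.le_one j x⟩ x₀
  have hone : ∀ j, P.f j x₀ ≤ P.f j x₀ * condTopStatPU Q (P.f j) := fun j => by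
    calc P.f j x₀ = P.f j x₀ * ∑ i, Q.f i x₀ := by rw [Q.sum_one, mul_one]
      _ ≤ P.f j x₀ * condTopStatPU Q (P.f j) := by
          rw [Finset.mul_sum, condTopStatPU, Finset.mul_sum]
          exact Finset.sum_le_sum fun i _ =>
            mul_le_mul_biSup_tsupport (Q.le_one i) (P.nonneg j x₀)
  calc (1 : ℝ) = ∑ j, P.f j x₀ := (P.sum_one x₀).symm
    _ ≤ ∑ j, P.f j x₀ * condTopStatPU Q (P.f j) := Finset.sum_le_sum fun j _ => hone j
    _ ≤ tailStat T Φ Ψ n := le_tailStat T Φ Ψ n hmem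

lemma tailStat_le_mul [Nonempty X] (T : X → X) (Φ' Φ Ψ : PartUnity X) (n : ℕ) {K : ℝ}
    (hK : 0 ≤ K)
    (h : ∀ ψ, condTopStatPU (PartUnity.dyn T Φ' n) ψ ≤ K * condTopStatPU (PartUnity.dyn T Φ n) ψ) :
    tailStat T Φ' Ψ n ≤ K * tailStat T Φ Ψ n := by
  refine tailStat_le T Φ' Ψ n (mul_nonneg hK (zero_le_one.trans (one_le_tailStat T Φ Ψ n)))
    fun a ha => ?_
  calc ∑ j, a j * condTopStatPU (PartUnity.dyn T Φ' n) ((PartUnity.dyn T Ψ n).f j)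
      ≤ ∑ j, a j * (K * condTopStatPU (PartUnity.dyn T Φ n) ((PartUnity.dyn T Ψ n).f j)) :=
        Finset.sum_le_sum fun j _ => mul_le_mul_of_nonneg_left (h _) (nonneg_of_mem_weights ha j)
    _ = K * ∑ j, a j * condTopStatPU (PartUnity.dyn T Φ n) ((PartUnity.dyn T Ψ n).f j) := by
        rw [Finset.mul_sum]; exact Finset.sum_congr rfl fun j _ => by ring
    _ ≤ K * tailStat T Φ Ψ n := mul_le_mul_of_nonneg_left (le_tailStat T Φ Ψ n ha) hK

lemma log_tailStat_div_mem_Icc [Nonempty X] (T : X → X) (Φ Ψ : PartUnity X) (n : ℕ) :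
    Real.log (tailStat T Φ Ψ n) / n ∈ Set.Icc 0 (Real.log Φ.n) := by
  have hlog : 0 ≤ Real.log Φ.n := Real.log_nonneg (by exact_mod_cast Φ.n_pos)
  refine ⟨div_nonneg (Real.log_nonneg (one_le_tailStat T Φ Ψ n)) n.cast_nonneg, ?_⟩
  rcases n.eq_zero_or_pos with rfl | hn
  · simpa using hlog
  rw [div_le_iff₀ (by exact_mod_cast hn), mul_comm, ← Real.log_pow]
  exact Real.log_le_log (zero_lt_one.trans_le (one_le_tailStat T Φ Ψ n)) (tailStat_le_pow T Φ Ψ n)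

lemma tailLoc_le_condTopEntPU (T : X → X) {Φ : PartUnity X} (hΦ : Φ.Cont) (Ψ : PartUnity X) :
    (tailLoc T Φ Ψ : EReal) ≤ condTopEntPU T Ψ :=
  le_iSup (fun Φ' : {Φ' : PartUnity X // Φ'.Cont} => ((tailLoc T Φ'.1 Ψ : ℝ) : EReal)) ⟨Φ, hΦ⟩

lemma tailLoc_le_add [Nonempty X] (T : X → X) (Φ' Φ Ψ : PartUnity X) {ε : ℝ} (hε : 0 ≤ ε)
    (h : ∀ n, tailStat T Φ' Ψ n ≤ Real.exp ε ^ n * tailStat T Φ Ψ n) :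
    tailLoc T Φ' Ψ ≤ tailLoc T Φ Ψ + ε := by
  set u := fun n : ℕ => Real.log (tailStat T Φ' Ψ n) / n
  set v := fun n : ℕ => Real.log (tailStat T Φ Ψ n) / n
  have huv : ∀ n, u n ≤ v n + ε := by
    intro n
    rcases n.eq_zero_or_pos with rfl | hn
    · simpa [u, v] using hε
    have hlog : Real.log (tailStat T Φ' Ψ n) ≤ n * ε + Real.log (tailStat T Φ Ψ n) := by
      calc Real.log (tailStat T Φ' Ψ n) ≤ Real.log (Real.exp ε ^ n * tailStat T Φ Ψ n) :=
            Real.log_le_log (zero_lt_one.trans_le (one_le_tailStat T Φ' Ψ n)) (h n)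
        _ = n * ε + Real.log (tailStat T Φ Ψ n) := by
            rw [Real.log_mul (by positivity)
              (zero_lt_one.trans_le (one_le_tailStat T Φ Ψ n)).ne', Real.log_pow, Real.log_exp]
    have hn' : (0 : ℝ) < n := by exact_mod_cast hn
    simp only [u, v]
    rw [div_add' _ _ _ hn'.ne', div_le_div_iff_of_pos_right hn']
    linarith
  have hv := log_tailStat_div_mem_Icc T Φ Ψ
  have hu := log_tailStat_div_mem_Icc T Φ' Ψ
  calc tailLoc T Φ' Ψ ≤ atTop.limsup fun n => v n + ε :=
        limsup_le_limsup (Eventually.of_forall huv)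
          (isBoundedUnder_of ⟨0, fun n => (hu n).1⟩).isCoboundedUnder_le
          (isBoundedUnder_of ⟨Real.log Φ.n + ε, fun n => by linarith [(hv n).2]⟩)
    _ = tailLoc T Φ Ψ + ε :=
        limsup_add_const atTop v ε (isBoundedUnder_of ⟨_, fun n => (hv n).2⟩)
          (isBoundedUnder_of ⟨0, fun n => (hv n).1⟩).isCoboundedUnder_le

end TailStat

section Metric

variable [PseudoMetricSpace X]

lemma PartUnity.exists_sum_biSup_le_of_diam_lt (Φ' : PartUnity X)
    (hΦ' : ∀ a, UniformContinuous (Φ'.f a)) {η : ℝ} (hη : 0 < η) :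
    ∃ δ > 0, ∀ S : Set X, Bornology.IsBounded S → Metric.diam S < δ →
      ∑ a, ⨆ x ∈ S, Φ'.f a x ≤ 1 + Φ'.n * η := by
  obtain ⟨δ, hδ, hclose⟩ :=
    Metric.uniformContinuous_iff.1 (uniformContinuous_pi.2 hΦ') η hη
  refine ⟨δ, hδ, fun S hS hdiam => ?_⟩
  rcases S.eq_empty_or_nonempty with rfl | ⟨y₀, hy₀⟩
  · refine (Finset.sum_nonpos fun a _ => Real.biSup_le le_rfl fun x hx => hx.elim).trans ?_
    positivity
  have hsup : ∀ a, ⨆ x ∈ S, Φ'.f a x ≤ Φ'.f a y₀ + η := fun a =>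
    Real.biSup_le (add_nonneg (Φ'.nonneg a y₀) hη.le) fun x hx => by
      have hdist := (dist_le_pi_dist (fun a => Φ'.f a x) (fun a => Φ'.f a y₀) a).trans_lt
        (hclose ((Metric.dist_le_diam_of_mem hS hx hy₀).trans_lt hdiam))
      linarith [le_abs_self (Φ'.f a x - Φ'.f a y₀), Real.dist_eq (Φ'.f a x) (Φ'.f a y₀)]
  calc ∑ a, ⨆ x ∈ S, Φ'.f a x ≤ ∑ a, (Φ'.f a y₀ + η) := Finset.sum_le_sum fun a _ => hsup a
    _ = 1 + Φ'.n * η := by simp [Finset.sum_add_distrib, Φ'.sum_one]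

lemma exists_tailLoc_le_add [CompactSpace X] [Nonempty X] (T : X → X) {Φ' : PartUnity X}
    (hΦ' : Φ'.Cont) (Ψ : PartUnity X) {ε : ℝ} (hε : 0 < ε) :
    ∃ δ > 0, ∀ Φ : PartUnity X, Φ.diam < δ → tailLoc T Φ' Ψ ≤ tailLoc T Φ Ψ + ε := by
  have hn : (0 : ℝ) < Φ'.n := by exact_mod_cast Φ'.n_pos
  obtain ⟨δ, hδ, hsum⟩ := Φ'.exists_sum_biSup_le_of_diam_lt
    (fun a => CompactSpace.uniformContinuous_of_continuous (hΦ' a))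
    (div_pos (sub_pos.2 (Real.one_lt_exp_iff.2 hε)) hn)
  refine ⟨δ, hδ, fun Φ hΦ => tailLoc_le_add T Φ' Φ Ψ hε.le fun n => ?_⟩
  have hb : ∀ j, ∑ a, ⨆ x ∈ tsupport (Φ.f j), Φ'.f a x ≤ Real.exp ε := fun j => by
    have := hsum _ (isClosed_tsupport _).isCompact.isBounded
      ((Φ.diam_tsupport_le j).trans_lt hΦ)
    rwa [mul_div_cancel₀ _ hn.ne', add_sub_cancel] at this
  refine tailStat_le_mul T Φ' Φ Ψ n (by positivity) fun ψ => ?_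
  simpa only [condTopStatPU_eq_weightedSupSum] using
    PartUnity.weightedSupSum_dyn_le T Φ' Φ (Real.exp_nonneg ε) hb (tsupport ψ) n
      (w := 1) (fun _ => zero_le_one) (fun _ => le_rfl) id

end Metric

theorem tailLoc_tendsto_condTopEntPU_general {X : Type*} [MetricSpace X] [CompactSpace X] [Nonempty X]
    (T : X → X)
    (Φ : ℕ → PartUnity X) (hΦc : ∀ k, (Φ k).Cont)
    (hdiam : Filter.Tendsto (fun k => (Φ k).diam) Filter.atTop (nhds 0))
    (Ψ : PartUnity X) :
    Filter.Tendsto (fun k => ((tailLoc T (Φ k) Ψ : ℝ) : EReal)) Filter.atTop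
      (nhds (condTopEntPU T Ψ)) := by
  refine tendsto_order.2 ⟨fun b hb => ?_, fun b hb => Eventually.of_forall fun k =>
    (tailLoc_le_condTopEntPU T (hΦc k) Ψ).trans_lt hb⟩
  obtain ⟨⟨Φ', hΦ'⟩, hb⟩ := lt_iSup_iff.1 hb
  obtain ⟨r, hbr, hr⟩ := EReal.lt_iff_exists_real_btwn.1 hb
  obtain ⟨δ, hδ, hle⟩ := exists_tailLoc_le_add T hΦ' Ψ (sub_pos.2 (EReal.coe_lt_coe_iff.1 hr))
  filter_upwards [hdiam.eventually_lt_const hδ] with k hk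
  refine hbr.trans_le (EReal.coe_le_coe_iff.2 ?_)
  linarith [hle (Φ k) hk]

/-- If `diam(Φ_k) → 0` then `h̃(Φ_k|Ψ) → h̃(T|Ψ)` for every
continuous partition of unity `Ψ`. -/
theorem tailLoc_tendsto_condTopEntPU {X : Type*} [MetricSpace X] [CompactSpace X] [Nonempty X]
    [MeasurableSpace X] [BorelSpace X]
    (T : X → X) (hT : Continuous T) (hTsurj : Function.Surjective T)
    (Φ : ℕ → PartUnity X) (hΦc : ∀ k, (Φ k).Cont)
    (hdiam : Filter.Tendsto (fun k => (Φ k).diam) Filter.atTop (nhds 0))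
    (Ψ : PartUnity X) (hΨ : Ψ.Cont) :
    Filter.Tendsto (fun k => ((tailLoc T (Φ k) Ψ : ℝ) : EReal)) Filter.atTop
      (nhds (condTopEntPU T Ψ)) :=
  tailLoc_tendsto_condTopEntPU_general T Φ hΦc hdiam Ψ
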